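/- arXiv:1206.3220 — 2 statements merged into one kernel-verified Lean document; each statement's English description precedes it below -/
import Mathlib

section
/- Fix i ∈ I and n ∈ ℕ. Then the random variable L^i_{ζ_n} := Y_{ζ_n} S^i_{ζ_n} / S^i_0 is P-a.s. nonnegative with E_P[L^i_{ζ_n}] = 1, and any probability measure Q satisfying the valuation identity for asset i satisfies: (a) Q restricted to F_0 coincides with P restricted to F_0, and (b) for every s ≥ 0 and every A ∈ F_s, Q[A ∩ {s < ζ_n}] = E_P[L^i_{ζ_n} 1_A ; s < ζ_n]. In particular, Q restricted to F_{ζ_n−} is the measure with density L^i_{ζ_n} with respect to P, where F_{τ−} denotes the σ-algebra generated by F_0 together with all sets of the form A ∩ {s < τ} with s ≥ 0 and A ∈ F_s. -/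
open MeasureTheory Filter Set
open scoped NNReal ENNReal

noncomputable section

namespace ExchangeOptions

variable {Ω : Type*} {m : MeasurableSpace Ω}

/-- An extended (possibly infinite-valued) stopping time for the filtration `F`. -/
def IsExtStoppingTime (F : Filtration ℝ≥0 m) (τ : Ω → ℝ≥0∞) : Prop :=
  ∀ t : ℝ≥0, MeasurableSet[F t] {ω | τ ω ≤ (t : ℝ≥0∞)}

/-- The σ-algebra `F_τ` at an extended stopping time `τ`. -/
def IsExtStoppingTime.measurableSpace {F : Filtration ℝ≥0 m} {τ : Ω → ℝ≥0∞}
    (hτ : IsExtStoppingTime F τ) : MeasurableSpace Ω where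
  MeasurableSet' A := ∀ t : ℝ≥0, MeasurableSet[F t] (A ∩ {ω | τ ω ≤ (t : ℝ≥0∞)})
  measurableSet_empty := fun t => by simp
  measurableSet_compl := fun A hA t => by
    have h : Aᶜ ∩ {ω | τ ω ≤ (t : ℝ≥0∞)} =
        {ω | τ ω ≤ (t : ℝ≥0∞)} \ (A ∩ {ω | τ ω ≤ (t : ℝ≥0∞)}) := by
      ext ω; by_cases h : ω ∈ A <;> simp [h]
    rw [h]
    exact (hτ t).diff (hA t)
  measurableSet_iUnion := fun s hs t => by
    rw [Set.iUnion_inter]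
    exact MeasurableSet.iUnion fun n => hs n t

/-- The σ-algebra `F_{τ-}`, generated by `F_0` together with all sets
`A ∩ {s < τ}` where `s : ℝ≥0` and `A ∈ F_s`. -/
def sigmaPre (F : Filtration ℝ≥0 m) (τ : Ω → ℝ≥0∞) : MeasurableSpace Ω :=
  (F 0 : MeasurableSpace Ω) ⊔ MeasurableSpace.generateFrom
    {B | ∃ (s : ℝ≥0) (A : Set Ω), MeasurableSet[F s] A ∧ B = A ∩ {ω | (s : ℝ≥0∞) < τ ω}}

/-- Evaluation of a process at an extended stopping time (junk value at `∞`). -/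
def ev (X : ℝ≥0 → Ω → ℝ) (τ : Ω → ℝ≥0∞) (ω : Ω) : ℝ := X (τ ω).toNNReal ω

/-- The underlying financial model, together with the standing assumptions:
nonnegative adapted assets `S i` vanishing from the default time `ζ` onwards, with
strictly positive a.s.-constant initial values `S0 i`; a nonnegative stochastic discount
factor `Y` with `Y_0 = 1` a.s.; and a sequence `ζn` of stopping times nicely approximating
the default time such that every stopped process `(Y_{ζn ∧ t} S^i_{ζn ∧ t})_t` is a
`P`-a.s. càdlàg martingale.  The probability `P` lives on `F_∞ = ⨆ t, F t`. -/
structure Model (ι : Type*) {Ω : Type*} {m : MeasurableSpace Ω}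
    (F : Filtration ℝ≥0 m) (P : Measure Ω) where
  S : ι → ℝ≥0 → Ω → ℝ
  Y : ℝ≥0 → Ω → ℝ
  S0 : ι → ℝ
  ζ : Ω → ℝ≥0∞
  ζn : ℕ → Ω → ℝ≥0
  nonempty : Nonempty ι
  hFinf : (⨆ t : ℝ≥0, (F t : MeasurableSpace Ω)) = m
  hP : IsProbabilityMeasure P
  hζ : IsExtStoppingTime F ζ
  S_nonneg : ∀ i t ω, 0 ≤ S i t ω
  S_adapted : ∀ i, Adapted F (S i)
  S_default : ∀ i (t : ℝ≥0) ω, ζ ω ≤ (t : ℝ≥0∞) → S i t ω = 0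
  S0_pos : ∀ i, 0 < S0 i
  S0_eq : ∀ i, ∀ᵐ ω ∂P, S i 0 ω = S0 i
  Y_nonneg : ∀ t ω, 0 ≤ Y t ω
  Y0 : ∀ᵐ ω ∂P, Y 0 ω = 1
  ζn_stop : ∀ n, IsStoppingTime F (fun ω => ((ζn n ω : ℝ≥0) : WithTop ℝ≥0))
  ζn_mono : ∀ ω, Monotone fun n => ζn n ω
  ζn_le : ∀ (n : ℕ) ω, ζn n ω ≤ (n : ℝ≥0)
  ζn_tendsto : ∀ ω, Tendsto (fun n => (ζn n ω : ℝ≥0∞)) atTop (nhds (ζ ω))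
  mart : ∀ (n : ℕ) (i : ι),
    Martingale (fun t ω => Y (min (ζn n ω) t) ω * S i (min (ζn n ω) t) ω) F P
  cadlag : ∀ (n : ℕ) (i : ι), ∀ᵐ ω ∂P,
    (∀ t : ℝ≥0, ContinuousWithinAt
      (fun s => Y (min (ζn n ω) s) ω * S i (min (ζn n ω) s) ω) (Set.Ici t) t) ∧
    (∀ t : ℝ≥0, 0 < t → ∃ l : ℝ, Tendsto
      (fun s => Y (min (ζn n ω) s) ω * S i (min (ζn n ω) s) ω)
      (nhdsWithin t (Set.Iio t)) (nhds l))

variable {ι : Type*} {F : Filtration ℝ≥0 m} {P : Measure Ω}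

/-- `Q` satisfies the valuation identity for asset `i`:  `Q` is a probability and, for every
extended stopping time `T` and nonnegative `F_T`-measurable `ξ`,
`E_P[Y_T S^i_T ξ ; T < ζ] = S^i_0 E_Q[ξ ; T < ζ]`. -/
def Model.ValId (M : Model ι F P) (i : ι) (Q : Measure Ω) : Prop :=
  IsProbabilityMeasure Q ∧
  ∀ (T : Ω → ℝ≥0∞) (hT : IsExtStoppingTime F T) (ξ : Ω → ℝ≥0∞),
    Measurable[hT.measurableSpace] ξ →
    ∫⁻ ω in {ω | T ω < M.ζ ω}, ENNReal.ofReal (ev M.Y T ω * ev (M.S i) T ω) * ξ ω ∂P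
      = ENNReal.ofReal (M.S0 i) * ∫⁻ ω in {ω | T ω < M.ζ ω}, ξ ω ∂Q

/-- The asset-price ratio process `R^{ij} = (S^i / S^j) 1_{S^j > 0}`. -/
def Model.R (M : Model ι F P) (i j : ι) (t : ℝ≥0) (ω : Ω) : ℝ :=
  if 0 < M.S j t ω then M.S i t ω / M.S j t ω else 0

/-- `ρ^{ij} = liminf_n R^{ij}_{ζ_n}` (computed in `ℝ≥0∞`). -/
def Model.rho (M : Model ι F P) (i j : ι) (ω : Ω) : ℝ≥0∞ :=
  Filter.liminf (fun n => ENNReal.ofReal (M.R i j (M.ζn n ω) ω)) atTop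

/-- The value `EX^{ij}(T) = E_P[Y_T (S^j_T − S^i_T)_+ ; T < ζ]` of the European option to
exchange asset `i` for asset `j` at time `T`. -/
def Model.EX (M : Model ι F P) (i j : ι) (T : Ω → ℝ≥0∞) : ℝ≥0∞ :=
  ∫⁻ ω in {ω | T ω < M.ζ ω},
    ENNReal.ofReal (ev M.Y T ω * max (ev (M.S j) T ω - ev (M.S i) T ω) 0) ∂P

/-- The value `AX^{ij}(T) = sup_{τ ≤ T} EX^{ij}(τ)` of the American option to exchange
asset `i` for asset `j` up to time `T`; the supremum is over stopping times `τ ≤ T`. -/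
def Model.AX (M : Model ι F P) (i j : ι) (T : Ω → ℝ≥0∞) : ℝ≥0∞ :=
  ⨆ (τ : Ω → ℝ≥0∞) (_ : IsExtStoppingTime F τ) (_ : ∀ ω, τ ω ≤ T ω), M.EX i j τ

/-!
Since `ζ_n ≤ n`, the martingale property of the stopped deflated price between the times `0`
and `n` gives `E_P[Y_{ζ_n} S^i_{ζ_n} ; B] = S^i_0 P(B)` for `B ∈ F_0`. For `D ∈ F_{ζ_n}`, the
valuation identity with `ξ = 1` at the stopping time equal to `ζ_n` on `D` and to `∞` off `D`
reads `S^i_0 Q(D ∩ {ζ_n < ζ}) = E_P[Y_{ζ_n} S^i_{ζ_n} ; D]`, because `S^i` vanishes from `ζ` on.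
With `D = Ω` this shows `Q(ζ_n < ζ) = 1`, so `Q` has density `L` on all of `F_{ζ_n}`, a
σ-algebra containing `F_0` and every `A ∩ {s < ζ_n}` with `A ∈ F_s`, hence `F_{ζ_n-}`.
-/

theorem IsExtStoppingTime.measurable {F : Filtration ℝ≥0 m} {τ : Ω → ℝ≥0∞}
    (hτ : IsExtStoppingTime F τ) : Measurable τ := by
  refine measurable_of_Iic fun x => ?_
  induction x using ENNReal.recTopCoe with
  | top => simp
  | coe t => exact F.le t _ (hτ t)

theorem _root_.MeasureTheory.IsStoppingTime.isExtStoppingTime_coe {F : Filtration ℝ≥0 m}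
    {σ : Ω → ℝ≥0} (hσ : IsStoppingTime F fun ω => (σ ω : WithTop ℝ≥0)) :
    IsExtStoppingTime F fun ω => (σ ω : ℝ≥0∞) := fun t => by
  simpa only [ENNReal.coe_le_coe, WithTop.coe_le_coe] using hσ t

theorem _root_.MeasureTheory.IsStoppingTime.isExtStoppingTime_ite {F : Filtration ℝ≥0 m}
    {σ : Ω → ℝ≥0} (hσ : IsStoppingTime F fun ω => (σ ω : WithTop ℝ≥0)) {D : Set Ω}
    [DecidablePred (· ∈ D)] (hD : MeasurableSet[hσ.measurableSpace] D) :
    IsExtStoppingTime F fun ω => if ω ∈ D then (σ ω : ℝ≥0∞) else ∞ := fun t => by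
  have hset : {ω | (if ω ∈ D then (σ ω : ℝ≥0∞) else ∞) ≤ t}
      = D ∩ {ω | (σ ω : WithTop ℝ≥0) ≤ t} := by
    ext ω
    by_cases h : ω ∈ D
    · simp only [h, if_true, Set.mem_ofPred_eq, Set.mem_inter_iff, true_and, ENNReal.coe_le_coe]
      exact WithTop.coe_le_coe.symm
    · simp [h]
  rw [hset]
  exact hD.2 t

theorem _root_.MeasureTheory.IsStoppingTime.measurableSet_inter_lt_of_measurableSet
    {ι : Type*} [LinearOrder ι] [TopologicalSpace ι] [OrderTopology ι] [SecondCountableTopology ι]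
    {F : Filtration ι m} {τ : Ω → WithTop ι} (hτ : IsStoppingTime F τ) {s : ι} {A : Set Ω}
    (hA : MeasurableSet[F s] A) : MeasurableSet[hτ.measurableSpace] (A ∩ {ω | s < τ ω}) := by
  have hs := isStoppingTime_const F s
  have h := hs.measurableSet_inter_le hτ A (by rwa [IsStoppingTime.measurableSpace_const])
  have h' := IsStoppingTime.measurableSpace_mono _ hτ (fun ω => min_le_right _ _) _ h
  convert h'.inter (hτ.measurableSet_gt' s) using 1
  exact Set.ext fun ω =>
    ⟨fun ⟨hA, (hlt : (s : WithTop ι) < τ ω)⟩ => ⟨⟨hA, hlt.le⟩, hlt⟩, fun h => ⟨h.1.1, h.2⟩⟩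

namespace Model

variable (M : Model ι F P) (i : ι) (n : ℕ)

def deflatedPrice (ω : Ω) : ℝ :=
  M.Y (M.ζn n ω) ω * M.S i (M.ζn n ω) ω

theorem deflatedPrice_nonneg (ω : Ω) : 0 ≤ M.deflatedPrice i n ω :=
  mul_nonneg (M.Y_nonneg _ _) (M.S_nonneg _ _ _)

theorem deflatedPrice_eq_stopped :
    M.deflatedPrice i n = fun ω => M.Y (min (M.ζn n ω) n) ω * M.S i (min (M.ζn n ω) n) ω := by
  ext ω
  simp only [deflatedPrice, min_eq_left (M.ζn_le n ω)]

theorem integrable_deflatedPrice : Integrable (M.deflatedPrice i n) P := by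
  rw [deflatedPrice_eq_stopped]
  exact (M.mart n i).integrable n

/-- Optional stopping between the deterministic times `0` and `n ≥ ζ_n`. -/
theorem setIntegral_deflatedPrice {B : Set Ω} (hB : MeasurableSet[F 0] B) :
    ∫ ω in B, M.deflatedPrice i n ω ∂P = M.S0 i * P.real B := by
  have := M.hP
  have hstart : ∀ᵐ ω ∂P, M.Y (min (M.ζn n ω) 0) ω * M.S i (min (M.ζn n ω) 0) ω = M.S0 i := by
    filter_upwards [M.Y0, M.S0_eq i] with ω hY hS
    rw [min_eq_right zero_le, hY, hS, one_mul]
  rw [deflatedPrice_eq_stopped]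
  beta_reduce
  rw [← (M.mart n i).setIntegral_eq zero_le hB,
    setIntegral_congr_ae (F.le 0 _ hB) (hstart.mono fun ω h _ => h), setIntegral_const,
    smul_eq_mul, mul_comm]

theorem setLIntegral_ofReal_deflatedPrice {B : Set Ω} (hB : MeasurableSet[F 0] B) :
    ∫⁻ ω in B, ENNReal.ofReal (M.deflatedPrice i n ω) ∂P = ENNReal.ofReal (M.S0 i) * P B := by
  have := M.hP
  rw [← ofReal_integral_eq_lintegral_ofReal (M.integrable_deflatedPrice i n).integrableOn
    (ae_of_all _ (M.deflatedPrice_nonneg i n)), M.setIntegral_deflatedPrice i n hB,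
    ENNReal.ofReal_mul (M.S0_pos i).le, measureReal_def, ENNReal.ofReal_toReal (measure_ne_top P B)]

theorem ofReal_S0_ne_zero : ENNReal.ofReal (M.S0 i) ≠ 0 :=
  (ENNReal.ofReal_pos.2 (M.S0_pos i)).ne'

theorem lintegral_ofReal_deflatedPrice_div (μ : Measure Ω) :
    ∫⁻ ω, ENNReal.ofReal (M.deflatedPrice i n ω / M.S0 i) ∂μ
      = (∫⁻ ω, ENNReal.ofReal (M.deflatedPrice i n ω) ∂μ) / ENNReal.ofReal (M.S0 i) := by
  simp_rw [ENNReal.ofReal_div_of_pos (M.S0_pos i), div_eq_mul_inv]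
  exact lintegral_mul_const' _ _ (ENNReal.inv_ne_top.2 (M.ofReal_S0_ne_zero i))

theorem setLIntegral_ofReal_deflatedPrice_div {B : Set Ω} (hB : MeasurableSet[F 0] B) :
    ∫⁻ ω in B, ENNReal.ofReal (M.deflatedPrice i n ω / M.S0 i) ∂P = P B := by
  rw [lintegral_ofReal_deflatedPrice_div, setLIntegral_ofReal_deflatedPrice _ _ _ hB,
    mul_comm, ENNReal.mul_div_cancel_right (M.ofReal_S0_ne_zero i) ENNReal.ofReal_ne_top]

theorem deflatedPrice_eq_zero_of_ζ_le {ω : Ω} (h : M.ζ ω ≤ M.ζn n ω) :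
    M.deflatedPrice i n ω = 0 := by
  rw [deflatedPrice, M.S_default i _ ω h, mul_zero]

theorem measurableSet_ζn_lt_ζ : MeasurableSet {ω | (M.ζn n ω : ℝ≥0∞) < M.ζ ω} :=
  measurableSet_lt (M.ζn_stop n).isExtStoppingTime_coe.measurable M.hζ.measurable

theorem setLIntegral_inter_ζn_lt_ζ {D : Set Ω} :
    ∫⁻ ω in D ∩ {ω | (M.ζn n ω : ℝ≥0∞) < M.ζ ω}, ENNReal.ofReal (M.deflatedPrice i n ω) ∂P
      = ∫⁻ ω in D, ENNReal.ofReal (M.deflatedPrice i n ω) ∂P := by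
  rw [Set.inter_comm, ← Measure.restrict_restrict (M.measurableSet_ζn_lt_ζ n),
    ← lintegral_indicator (M.measurableSet_ζn_lt_ζ n)]
  refine lintegral_congr fun ω => Set.indicator_apply_eq_self.2 fun h => ?_
  rw [M.deflatedPrice_eq_zero_of_ζ_le i n (not_lt.1 h), ENNReal.ofReal_zero]

variable {M i} {Q : Measure Ω}

/-- The valuation identity at the stopping time equal to `ζ_n` on `D` and to `∞` off `D`. -/
theorem ValId.ofReal_S0_mul_measure_inter (hQ : M.ValId i Q) {D : Set Ω}
    (hD : MeasurableSet[(M.ζn_stop n).measurableSpace] D) :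
    ENNReal.ofReal (M.S0 i) * Q (D ∩ {ω | (M.ζn n ω : ℝ≥0∞) < M.ζ ω})
      = ∫⁻ ω in D, ENNReal.ofReal (M.deflatedPrice i n ω) ∂P := by
  classical
  have hT := (M.ζn_stop n).isExtStoppingTime_ite hD
  have hTζ : {ω | (if ω ∈ D then (M.ζn n ω : ℝ≥0∞) else ∞) < M.ζ ω}
      = D ∩ {ω | (M.ζn n ω : ℝ≥0∞) < M.ζ ω} := by
    ext ω
    by_cases h : ω ∈ D <;> simp [h]
  have hDE : MeasurableSet (D ∩ {ω | (M.ζn n ω : ℝ≥0∞) < M.ζ ω}) :=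
    ((M.ζn_stop n).measurableSpace_le _ hD).inter (M.measurableSet_ζn_lt_ζ n)
  have hval := hQ.2 _ hT (fun _ => 1) measurable_const
  rw [hTζ, setLIntegral_one] at hval
  rw [← hval, ← M.setLIntegral_inter_ζn_lt_ζ i n]
  refine setLIntegral_congr_fun hDE fun ω hω => ?_
  simp only [ev, if_pos hω.1, ENNReal.toNNReal_coe, mul_one, deflatedPrice]

theorem ValId.measure_compl_ζn_lt_ζ (hQ : M.ValId i Q) :
    Q {ω | (M.ζn n ω : ℝ≥0∞) < M.ζ ω}ᶜ = 0 := by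
  have := M.hP
  have := hQ.1
  have h := hQ.ofReal_S0_mul_measure_inter n MeasurableSet.univ
  rw [Set.univ_inter, Measure.restrict_univ, ← setLIntegral_univ,
    M.setLIntegral_ofReal_deflatedPrice i n MeasurableSet.univ, measure_univ] at h
  rw [measure_compl (M.measurableSet_ζn_lt_ζ n) (measure_ne_top Q _),
    (ENNReal.mul_right_inj (M.ofReal_S0_ne_zero i) ENNReal.ofReal_ne_top).1 h, measure_univ,
    tsub_self]

theorem ValId.ofReal_S0_mul_measure (hQ : M.ValId i Q) {D : Set Ω}
    (hD : MeasurableSet[(M.ζn_stop n).measurableSpace] D) :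
    ENNReal.ofReal (M.S0 i) * Q D = ∫⁻ ω in D, ENNReal.ofReal (M.deflatedPrice i n ω) ∂P := by
  rw [← hQ.ofReal_S0_mul_measure_inter n hD, measure_inter_conull (hQ.measure_compl_ζn_lt_ζ n)]

theorem ValId.measure_eq_setLIntegral (hQ : M.ValId i Q) {D : Set Ω}
    (hD : MeasurableSet[(M.ζn_stop n).measurableSpace] D) :
    Q D = ∫⁻ ω in D, ENNReal.ofReal (M.deflatedPrice i n ω / M.S0 i) ∂P := by
  rw [lintegral_ofReal_deflatedPrice_div, ← hQ.ofReal_S0_mul_measure n hD, mul_comm,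
    ENNReal.mul_div_cancel_right (M.ofReal_S0_ne_zero i) ENNReal.ofReal_ne_top]

end Model

theorem sigmaPre_le_measurableSpace {F : Filtration ℝ≥0 m} {σ : Ω → ℝ≥0}
    (hσ : IsStoppingTime F fun ω => (σ ω : WithTop ℝ≥0)) :
    sigmaPre F (fun ω => (σ ω : ℝ≥0∞)) ≤ hσ.measurableSpace := by
  refine sup_le (hσ.le_measurableSpace_of_const_le fun _ => zero_le) ?_
  refine MeasurableSpace.generateFrom_le ?_
  rintro _ ⟨s, A, hA, rfl⟩
  exact hσ.measurableSet_inter_lt_of_measurableSet hA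

/-- Fix `i` and `n`.  The random variable
`L = Y_{ζ_n} S^i_{ζ_n} / S^i_0` is `P`-a.s. nonnegative with `E_P[L] = 1`, and any
probability `Q` satisfying the valuation identity for asset `i` coincides with `P` on `F_0`
and satisfies `Q[A ∩ {s < ζ_n}] = E_P[L 1_A ; s < ζ_n]` for every `s ≥ 0` and `A ∈ F_s`;
in particular, `Q` restricted to `F_{ζ_n-}` has density `L` with respect to `P`. -/
theorem stmt0 {Ω ι : Type*} {m : MeasurableSpace Ω} {F : Filtration ℝ≥0 m} {P : Measure Ω}
    (M : Model ι F P) (i : ι) (n : ℕ) (L : Ω → ℝ)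
    (hL : L = fun ω => M.Y (M.ζn n ω) ω * M.S i (M.ζn n ω) ω / M.S0 i) :
    (∀ᵐ ω ∂P, 0 ≤ L ω) ∧
    (∫⁻ ω, ENNReal.ofReal (L ω) ∂P = 1) ∧
    ∀ Q : Measure Ω, M.ValId i Q →
      (∀ A : Set Ω, MeasurableSet[F 0] A → Q A = P A) ∧
      (∀ (s : ℝ≥0) (A : Set Ω), MeasurableSet[F s] A →
        Q (A ∩ {ω | s < M.ζn n ω}) =
          ∫⁻ ω in A ∩ {ω | s < M.ζn n ω}, ENNReal.ofReal (L ω) ∂P) ∧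
      (∀ A : Set Ω, MeasurableSet[sigmaPre F (fun ω => (M.ζn n ω : ℝ≥0∞))] A →
        Q A = ∫⁻ ω in A, ENNReal.ofReal (L ω) ∂P) := by
  have := M.hP
  have hL' : L = fun ω => M.deflatedPrice i n ω / M.S0 i := hL
  subst hL'
  have hζn := M.ζn_stop n
  refine ⟨ae_of_all _ fun ω => div_nonneg (M.deflatedPrice_nonneg i n ω) (M.S0_pos i).le, ?_,
    fun Q hQ => ⟨fun A hA => ?_, fun s A hA => ?_, fun A hA => ?_⟩⟩
  · simpa using M.setLIntegral_ofReal_deflatedPrice_div i n MeasurableSet.univ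
  · rw [hQ.measure_eq_setLIntegral n (hζn.le_measurableSpace_of_const_le (fun _ => zero_le) _ hA),
      M.setLIntegral_ofReal_deflatedPrice_div i n hA]
  · refine hQ.measure_eq_setLIntegral n ?_
    simpa only [WithTop.coe_lt_coe] using hζn.measurableSet_inter_lt_of_measurableSet hA
  · exact hQ.measure_eq_setLIntegral n (sigmaPre_le_measurableSpace hζn _ hA)

end ExchangeOptions
end
end

section
/- Fix i ∈ I. If Q and Q' are two probability measures each satisfying the valuation identity for asset i, then Q and Q' coincide on the σ-algebra generated by ⋃_{n∈ℕ} F_{ζ_n−}, where F_{τ−} denotes the σ-algebra generated by F_0 together with all sets of the form A ∩ {s < τ} with s ≥ 0 and A ∈ F_s. -/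
open MeasureTheory Filter Set
open scoped NNReal ENNReal

noncomputable section

namespace ExchangeOptions

variable {Ω : Type*} {m : MeasurableSpace Ω}

variable {ι : Type*} {F : Filtration ℝ≥0 m} {P : Measure Ω}

/-! Testing the valuation identity at a deterministic time `u` against `ξ = 1_B`, `B ∈ F_u`,
determines `Q` on the sets `B ∩ {u < ζ}`; at `u = 0` it also gives `Q(ζ > 0) = 1`. Sets of
`F_u` lying inside `{u < ζ_N}`, together with `F_0`, form a π-system generating
`⋁ₙ F_{ζₙ-}` (the `ζₙ` increase), and `Q = Q'` on it, so the π-λ theorem concludes. -/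

section PreSigmaAlgebra

variable {τ : ℕ → Ω → ℝ≥0}

def preGenerators (F : Filtration ℝ≥0 m) (τ : ℕ → Ω → ℝ≥0) : Set (Set Ω) :=
  {B | ∃ (u : ℝ≥0) (N : ℕ), MeasurableSet[F u] B ∧ ∀ ω ∈ B, u < τ N ω} ∪
    {B | MeasurableSet[F 0] B}

lemma isPiSystem_preGenerators (hτ : ∀ ω, Monotone fun n => τ n ω) :
    IsPiSystem (preGenerators F τ) := by
  rintro B₁ (⟨u₁, N₁, hB₁, hlt₁⟩ | hB₁) B₂ (⟨u₂, N₂, hB₂, hlt₂⟩ | hB₂) -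
  · refine Or.inl ⟨max u₁ u₂, max N₁ N₂,
      (F.mono (le_max_left _ _) _ hB₁).inter (F.mono (le_max_right _ _) _ hB₂), ?_⟩
    rintro ω ⟨hω₁, hω₂⟩
    exact max_lt ((hlt₁ ω hω₁).trans_le (hτ ω (le_max_left _ _)))
      ((hlt₂ ω hω₂).trans_le (hτ ω (le_max_right _ _)))
  · exact Or.inl ⟨u₁, N₁, hB₁.inter (F.mono bot_le _ hB₂), fun ω hω => hlt₁ ω hω.1⟩
  · exact Or.inl ⟨u₂, N₂, (F.mono bot_le _ hB₁).inter hB₂, fun ω hω => hlt₂ ω hω.2⟩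
  · exact Or.inr (hB₁.inter hB₂)

lemma iSup_sigmaPre_eq_generateFrom
    (hτ : ∀ n, IsStoppingTime F fun ω => ((τ n ω : ℝ≥0) : WithTop ℝ≥0)) :
    ⨆ n, sigmaPre F (fun ω => (τ n ω : ℝ≥0∞)) =
      MeasurableSpace.generateFrom (preGenerators F τ) := by
  have hlt : ∀ n (s : ℝ≥0),
      {ω | (s : ℝ≥0∞) < (τ n ω : ℝ≥0∞)} = {ω | (s : WithTop ℝ≥0) < (τ n ω : WithTop ℝ≥0)} := by
    intro n s; ext ω; simp only [mem_ofPred_eq, ENNReal.coe_lt_coe, WithTop.coe_lt_coe]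
  apply le_antisymm
  · refine iSup_le fun n => sup_le
      (fun B hB => MeasurableSpace.measurableSet_generateFrom (Or.inr hB)) ?_
    refine MeasurableSpace.generateFrom_le ?_
    rintro _ ⟨s, A, hA, rfl⟩
    refine MeasurableSpace.measurableSet_generateFrom
      (Or.inl ⟨s, n, hA.inter ?_, fun ω hω => ENNReal.coe_lt_coe.1 hω.2⟩)
    exact hlt n s ▸ (hτ n).measurableSet_gt s
  · refine MeasurableSpace.generateFrom_le ?_
    rintro B (⟨u, N, hB, hlt⟩ | hB)
    · refine le_iSup (fun n => sigmaPre F (fun ω => (τ n ω : ℝ≥0∞))) N _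
        (le_sup_right (α := MeasurableSpace Ω) _ ?_)
      refine MeasurableSpace.measurableSet_generateFrom ⟨u, B, hB, ?_⟩
      exact (inter_eq_left.2 fun ω hω => ENNReal.coe_lt_coe.2 (hlt ω hω)).symm
    · exact le_iSup (fun n => sigmaPre F (fun ω => (τ n ω : ℝ≥0∞))) 0 _
        (le_sup_left (α := MeasurableSpace Ω) _ hB)

lemma generateFrom_preGenerators_le : MeasurableSpace.generateFrom (preGenerators F τ) ≤ m := by
  refine MeasurableSpace.generateFrom_le ?_
  rintro B (⟨u, -, hB, -⟩ | hB)
  exacts [F.le u _ hB, F.le 0 _ hB]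

end PreSigmaAlgebra

namespace Model

variable (M : Model ι F P)

lemma coe_ζn_le_ζ (n : ℕ) (ω : Ω) : (M.ζn n ω : ℝ≥0∞) ≤ M.ζ ω :=
  ge_of_tendsto (M.ζn_tendsto ω) <|
    (eventually_ge_atTop n).mono fun _ hk => ENNReal.coe_le_coe.2 (M.ζn_mono ω hk)

lemma isExtStoppingTime_const (u : ℝ≥0) : IsExtStoppingTime F fun _ : Ω => (u : ℝ≥0∞) :=
  fun _ => MeasurableSet.const _

variable {M} {i : ι} {Q Q' : Measure Ω}

lemma ValId.const_time (hQ : M.ValId i Q) {u : ℝ≥0} {B : Set Ω} (hB : MeasurableSet[F u] B) :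
    ENNReal.ofReal (M.S0 i) * Q (B ∩ {ω | (u : ℝ≥0∞) < M.ζ ω}) =
      ∫⁻ ω in {ω | (u : ℝ≥0∞) < M.ζ ω},
        ENNReal.ofReal (M.Y u ω * M.S i u ω) * B.indicator 1 ω ∂P := by
  have hBT : MeasurableSet[(isExtStoppingTime_const (F := F) u).measurableSpace] B := by
    intro t
    by_cases hut : u ≤ t
    · simpa [hut] using F.mono hut _ hB
    · simp [hut]
  have h := hQ.2 _ _ (B.indicator 1) (Measurable.indicator (f := 1) measurable_const hBT)
  simp only [ev, ENNReal.toNNReal_coe] at h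
  rw [h, lintegral_indicator_one (F.le u _ hB), Measure.restrict_apply (F.le u _ hB)]

lemma ValId.measure_inter_lt_ζ_eq (hQ : M.ValId i Q) (hQ' : M.ValId i Q') {u : ℝ≥0}
    {B : Set Ω} (hB : MeasurableSet[F u] B) :
    Q (B ∩ {ω | (u : ℝ≥0∞) < M.ζ ω}) = Q' (B ∩ {ω | (u : ℝ≥0∞) < M.ζ ω}) := by
  have h := (hQ.const_time hB).trans (hQ'.const_time hB).symm
  exact (ENNReal.mul_right_inj (ENNReal.ofReal_pos.2 (M.S0_pos i)).ne' ENNReal.ofReal_ne_top).1 h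

lemma measurableSet_ζ_pos : MeasurableSet[F 0] {ω | 0 < M.ζ ω} := by
  simpa only [compl_ofPred, not_le, ENNReal.coe_zero] using (M.hζ 0).compl

lemma ValId.ae_ζ_pos (hQ : M.ValId i Q) : ∀ᵐ ω ∂Q, 0 < M.ζ ω := by
  have := M.hP
  have := hQ.1
  -- `S^i_0` vanishes on `{ζ = 0}`, so the `P`-side of the identity at time `0` is just `S^i_0`.
  have hsupp : (fun ω => ENNReal.ofReal (M.Y 0 ω * M.S i 0 ω)).support ⊆ {ω | 0 < M.ζ ω} := by
    intro ω hω
    by_contra hζ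
    simp [M.S_default i 0 ω (by simpa using hζ)] at hω
  have hP : ∫⁻ ω in {ω | 0 < M.ζ ω}, ENNReal.ofReal (M.Y 0 ω * M.S i 0 ω) ∂P =
      ENNReal.ofReal (M.S0 i) := by
    rw [setLIntegral_eq_of_support_subset hsupp]
    calc ∫⁻ ω, ENNReal.ofReal (M.Y 0 ω * M.S i 0 ω) ∂P
        = ∫⁻ _, ENNReal.ofReal (M.S0 i) ∂P := by
          refine lintegral_congr_ae ?_
          filter_upwards [M.Y0, M.S0_eq i] with ω hY hS
          rw [hY, hS, one_mul]
      _ = ENNReal.ofReal (M.S0 i) := by simp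
  have h := hQ.const_time (u := 0) MeasurableSet.univ
  simp only [ENNReal.coe_zero, univ_inter, indicator_univ, Pi.one_apply, mul_one, hP] at h
  refine (mem_ae_iff_prob_eq_one (F.le 0 _ M.measurableSet_ζ_pos)).2 ?_
  exact (ENNReal.mul_eq_left (ENNReal.ofReal_pos.2 (M.S0_pos i)).ne' ENNReal.ofReal_ne_top).1 h

lemma ValId.eqOn_preGenerators (hQ : M.ValId i Q) (hQ' : M.ValId i Q') :
    ∀ B ∈ preGenerators F M.ζn, Q B = Q' B := by
  rintro B (⟨u, N, hB, hlt⟩ | hB)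
  · have hB_eq : B ∩ {ω | (u : ℝ≥0∞) < M.ζ ω} = B := inter_eq_left.2 fun ω hω =>
      (ENNReal.coe_lt_coe.2 (hlt ω hω)).trans_le (M.coe_ζn_le_ζ N ω)
    simpa only [hB_eq] using hQ.measure_inter_lt_ζ_eq hQ' hB
  · calc Q B = Q (B ∩ {ω | 0 < M.ζ ω}) := (measure_inter_conull hQ.ae_ζ_pos).symm
      _ = Q' (B ∩ {ω | 0 < M.ζ ω}) := by
        simpa only [ENNReal.coe_zero] using hQ.measure_inter_lt_ζ_eq hQ' hB
      _ = Q' B := measure_inter_conull hQ'.ae_ζ_pos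

end Model

/-- If `Q` and `Q'` both satisfy the valuation identity for asset `i`,
then they coincide on the σ-algebra generated by `⋃ n, F_{ζ_n-}`. -/
theorem stmt1 {Ω ι : Type*} {m : MeasurableSpace Ω} {F : Filtration ℝ≥0 m} {P : Measure Ω}
    (M : Model ι F P) (i : ι) (Q Q' : Measure Ω)
    (hQ : M.ValId i Q) (hQ' : M.ValId i Q') :
    ∀ A : Set Ω,
      MeasurableSet[⨆ n : ℕ, sigmaPre F (fun ω => (M.ζn n ω : ℝ≥0∞))] A → Q A = Q' A := by
  intro A hA
  have := hQ.1
  have := hQ'.1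
  have hgen := iSup_sigmaPre_eq_generateFrom M.ζn_stop
  exact ext_on_measurableSpace_of_generate_finite m _ (hQ.eqOn_preGenerators hQ')
    (hgen ▸ generateFrom_preGenerators_le) hgen (isPiSystem_preGenerators M.ζn_mono)
    (by simp) hA

end ExchangeOptions
end
end
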